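/- arXiv:2101.06728 — 2 statements merged into one kernel-verified Lean document; each statement's English description precedes it below -/
import Mathlib

section
/- Let A, Ā ∈ ℝ^{N×N} with Ā = A + c·e_h·(e_h − e_r)ᵀ, c ≠ 0, r ≠ h. Then the pair (diag(A, Ā), [I_N −I_N]) has an unobservable state outside the span of the all-ones vector 1_{2N} corresponding to some eigenvalue λ if and only if the pair (A, (e_h − e_r)ᵀ) has an unobservable state outside the span of 1_N corresponding to λ. Equivalently: there exists v with [λI−A; λI−Ā] annihilating [v; v̄] and v = v̄ ≠ 0 if and only if A v = λ v and (e_h − e_r)ᵀ v = 0. -/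
/-! Since `Ā v = A v + c (v h - v r) • e_h` with `c ≠ 0`, an eigenvector `v` of `A` for `λ` is
one of `Ā` exactly when `v h = v r`. -/

open Matrix

theorem Matrix.add_smul_vecMulVec_mulVec_eq_iff {n K : Type*} [Fintype n] [CommRing K]
    [NoZeroDivisors K] {B : Matrix n n K} {u w v : n → K} {c lam : K} (hu : u ≠ 0) (hc : c ≠ 0)
    (hB : B *ᵥ v = lam • v) :
    (B + c • vecMulVec u w) *ᵥ v = lam • v ↔ w ⬝ᵥ v = 0 := by
  rw [add_mulVec, hB, smul_mulVec, vecMulVec_mulVec, op_smul_eq_smul, smul_smul,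
    add_eq_left, smul_eq_zero, mul_eq_zero]
  simp [hu, hc]

theorem Matrix.map_add_smul_vecMulVec {n R S : Type*} [CommSemiring R] [CommSemiring S]
    (f : R →+* S) (A : Matrix n n R) (c : R) (u w : n → R) :
    (A + c • vecMulVec u w).map f = A.map f + f c • vecMulVec (f ∘ u) (f ∘ w) := by
  ext i j
  simp [vecMulVec_apply]

theorem sub_single_one_dotProduct {n K : Type*} [Fintype n] [DecidableEq n] [CommRing K]
    (h r : n) (v : n → K) : (Pi.single h 1 - Pi.single r 1) ⬝ᵥ v = v h - v r := by
  rw [sub_dotProduct, dotProduct_comm, dotProduct_single_one, dotProduct_comm,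
    dotProduct_single_one]

theorem stmt2_general {N : ℕ} (A : Matrix (Fin N) (Fin N) ℝ) (r h : Fin N)
    (c : ℝ) (hc : c ≠ 0) (lam : ℂ) (v vbar : Fin N → ℂ) :
    let Abar := A + c • Matrix.vecMulVec (Pi.single h 1) (Pi.single h 1 - Pi.single r 1)
    ((A.map Complex.ofReal).mulVec v = lam • v ∧
      (Abar.map Complex.ofReal).mulVec vbar = lam • vbar ∧ v = vbar ∧ v ≠ 0)
      ↔ (v = vbar ∧ v ≠ 0 ∧ (A.map Complex.ofReal).mulVec v = lam • v ∧ v h = v r) := by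
  intro Abar
  have hAbar : Abar.map Complex.ofReal = A.map Complex.ofReal
      + (c : ℂ) • vecMulVec (Pi.single h 1) (Pi.single h 1 - Pi.single r 1) := by
    refine (map_add_smul_vecMulVec Complex.ofRealHom A c _ _).trans ?_
    congr 3 <;> ext i <;> simp [Pi.single_apply, apply_ite Complex.ofReal]
  have hperturb (hAv : (A.map Complex.ofReal) *ᵥ v = lam • v) :
      (Abar.map Complex.ofReal) *ᵥ v = lam • v ↔ v h = v r := by
    rw [hAbar, add_smul_vecMulVec_mulVec_eq_iff (by simp) (by exact_mod_cast hc) hAv,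
      sub_single_one_dotProduct, sub_eq_zero]
  constructor
  · rintro ⟨hAv, hAbarv, rfl, hv0⟩
    exact ⟨rfl, hv0, hAv, (hperturb hAv).mp hAbarv⟩
  · rintro ⟨rfl, hv0, hAv, hhr⟩
    exact ⟨hAv, (hperturb hAv).mpr hhr, rfl, hv0⟩

/-- For Ā = A + c·e_h·(e_h−e_r)ᵀ, c ≠ 0, r ≠ h: a nonzero state [v; v̄]
is unobservable for (diag(A,Ā), [I −I]) at λ (i.e. A v = λ v, Ā v̄ = λ v̄, v = v̄, v ≠ 0)
iff v = v̄ ≠ 0, A v = λ v and v h = v r. -/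
theorem stmt2 {N : ℕ} (A : Matrix (Fin N) (Fin N) ℝ) (r h : Fin N) (hrh : r ≠ h)
    (c : ℝ) (hc : c ≠ 0) (lam : ℂ) (v vbar : Fin N → ℂ) :
    let Abar := A + c • Matrix.vecMulVec (Pi.single h 1) (Pi.single h 1 - Pi.single r 1)
    ((A.map Complex.ofReal).mulVec v = lam • v ∧
      (Abar.map Complex.ofReal).mulVec vbar = lam • vbar ∧ v = vbar ∧ v ≠ 0)
      ↔ (v = vbar ∧ v ≠ 0 ∧ (A.map Complex.ofReal).mulVec v = lam • v ∧ v h = v r) :=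
  stmt2_general A r h c hc lam v vbar
end

section
/- Let A, Ā ∈ ℝ^{N×N} with Ā = A − κℓ·e_h·(e_h − e_r)ᵀ (κℓ ≠ 0), and W with W·A = J̃·W as above. If the state evolves as x(t+1) = Ā·x(t) for t ≥ τ, then for every k ≥ 1 the residual satisfies r(τ+k) := W·x(τ+k) − J̃·W·x(τ+k−1) = −κℓ·((e_h − e_r)ᵀ Ā^{k−1} x(τ))·W e_h. In particular, each residual vector is a scalar multiple of W e_h. -/
open Matrix

section RankOneUpdate

variable {R : Type*} [CommRing R] {l n : Type*} [Fintype l] [Fintype n]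

theorem mul_sub_smul_vecMulVec_sub_mul_of_mul_eq {A : Matrix n n R} {J : Matrix l l R}
    {W : Matrix l n R} (hW : W * A = J * W) (c : R) (u b : n → R) :
    W * (A - c • vecMulVec u b) - J * W = -c • vecMulVec (W *ᵥ u) b := by
  rw [Matrix.mul_sub, hW, Matrix.mul_smul, mul_vecMulVec, sub_sub_cancel_left,
    neg_smul]

theorem mulVec_sub_mulVec_of_mul_eq {A : Matrix n n R} {J : Matrix l l R}
    {W : Matrix l n R} (hW : W * A = J * W) (c : R) (u b z : n → R) :
    W *ᵥ ((A - c • vecMulVec u b) *ᵥ z) - J *ᵥ (W *ᵥ z) = (-c * (b ⬝ᵥ z)) • W *ᵥ u := by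
  rw [mulVec_mulVec, mulVec_mulVec, ← sub_mulVec, mul_sub_smul_vecMulVec_sub_mul_of_mul_eq hW,
    smul_mulVec, vecMulVec_mulVec, op_smul_eq_smul, smul_smul]

end RankOneUpdate

theorem eq_pow_mulVec_of_forall_succ_eq {R n : Type*} [Semiring R] [Fintype n] [DecidableEq n]
    {M : Matrix n n R} {x : ℕ → n → R} {τ : ℕ} (hx : ∀ t, τ ≤ t → x (t + 1) = M *ᵥ x t)
    (j : ℕ) : x (τ + j) = (M ^ j) *ᵥ x τ := by
  induction j with
  | zero => simp
  | succ j ih =>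
    rw [← add_assoc, hx _ (Nat.le_add_right _ _), ih, mulVec_mulVec, ← pow_succ']

theorem stmt8_general {N m : ℕ} (A : Matrix (Fin N) (Fin N) ℝ) (r h : Fin N)
    (c : ℝ)
    (Jt : Matrix (Fin m) (Fin m) ℝ) (W : Matrix (Fin m) (Fin N) ℝ)
    (hW : W * A = Jt * W)
    (τ : ℕ) (x : ℕ → Fin N → ℝ) :
    let b : Fin N → ℝ := Pi.single h 1 - Pi.single r 1
    let Abar := A - c • Matrix.vecMulVec (Pi.single h 1) b
    (∀ t, τ ≤ t → x (t + 1) = Abar.mulVec (x t)) →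
      ∀ k : ℕ, W.mulVec (x (τ + k + 1)) - Jt.mulVec (W.mulVec (x (τ + k))) =
        (-c * (b ⬝ᵥ (Abar ^ k).mulVec (x τ))) • W.mulVec (Pi.single h 1) := by
  intro b Abar hx k
  rw [hx _ (Nat.le_add_right _ _), eq_pow_mulVec_of_forall_succ_eq hx k]
  exact mulVec_sub_mulVec_of_mul_eq hW c _ b _

/-- With W A = J̃ W and Ā = A − c·e_h(e_h−e_r)ᵀ (c = κℓ ≠ 0), if
x(t+1) = Ā x(t) for t ≥ τ then the residual at time τ+k (k ≥ 1) equals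
−c·((e_h−e_r)ᵀ Ā^{k−1} x(τ))·W e_h — a scalar multiple of W e_h. -/
theorem stmt8 {N m : ℕ} (A : Matrix (Fin N) (Fin N) ℝ) (r h : Fin N) (hrh : r ≠ h)
    (c : ℝ) (hc : c ≠ 0)
    (Jt : Matrix (Fin m) (Fin m) ℝ) (W : Matrix (Fin m) (Fin N) ℝ)
    (hW : W * A = Jt * W)
    (τ : ℕ) (x : ℕ → Fin N → ℝ) :
    let b : Fin N → ℝ := Pi.single h 1 - Pi.single r 1
    let Abar := A - c • Matrix.vecMulVec (Pi.single h 1) b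
    (∀ t, τ ≤ t → x (t + 1) = Abar.mulVec (x t)) →
      ∀ k : ℕ, W.mulVec (x (τ + k + 1)) - Jt.mulVec (W.mulVec (x (τ + k))) =
        (-c * (b ⬝ᵥ (Abar ^ k).mulVec (x τ))) • W.mulVec (Pi.single h 1) :=
  stmt8_general A r h c Jt W hW τ x
end
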